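/- Let θ > 0 and let c₀, c₁ be constants with 0 < c₀ < 2 < c₁ and c₁²/c₀ < 18/5. Then there exist s₀, β, δ ∈ (0,1) such that for all s ∈ (0, s₀) and all nonzero x, y ∈ ℝ² with ⟨x,y⟩ ≥ 0, x∧y < 0, |x-y| < β|y| and |x∧y| < δ|x||y|: -(9/10) Q_s(x,y) - c₀ θ² s² ⟨x,y⟩ - c₁ θ s (x∧y) ≤ 0. -/

import Mathlib

noncomputable section

/-- `nsq x = |x|²`, the squared Euclidean norm on `ℝ²`. -/
def nsq (x : Fin 2 → ℝ) : ℝ := ∑ i, x i ^ 2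

/-- The wedge product `x∧y = x₁y₂ - x₂y₁` on `ℝ²`. -/
def wedge (x y : Fin 2 → ℝ) : ℝ := x 0 * y 1 - x 1 * y 0

/-- The Euclidean inner product `⟨x,y⟩` on `ℝ²`. -/
def dot2 (x y : Fin 2 → ℝ) : ℝ := x 0 * y 0 + x 1 * y 1

/-- `k_{tθ}(x,y) = exp(-(e^{-t}/(1-e^{-2t}))[(1-cos(tθ))⟨x,y⟩ + sin(tθ) x∧y])`. -/
def kker (t θ : ℝ) (x y : Fin 2 → ℝ) : ℝ :=
  Real.exp (-(Real.exp (-t) / (1 - Real.exp (-2 * t))) *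
    ((1 - Real.cos (t * θ)) * dot2 x y + Real.sin (t * θ) * wedge x y))

/-- `τ(s) = log((1+s)/(1-s))` for `s ∈ (0,1)`. -/
def tau (s : ℝ) : ℝ := Real.log ((1 + s) / (1 - s))

/-- `Q_s(x,y) = |(1+s)x - (1-s)y|²`. -/
def Qform (s : ℝ) (x y : Fin 2 → ℝ) : ℝ := nsq ((1 + s) • x - (1 - s) • y)

end


/-!
Put `D = ⟨x,y⟩`, `W = x∧y` and `k = c₁² / ((18/5) c₀) < 1`. The vectors
`u = (1+s)x - (1-s)y` and `x + y` satisfy `u ∧ (x+y) = 2W`, so Lagrange's identity gives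
`4W² ≤ Q_s(x,y) |x+y|²`. Near the diagonal `|x-y|` is a small multiple of `|x+y|`, and then the
polarization identity `4D = |x+y|² - |x-y|²` gives `k|x+y|² ≤ 4D`. Together,
`(c₁θsW)² ≤ 4 · (9/10) Q_s · c₀θ²s²D`, and AM-GM yields `|c₁θsW| ≤ (9/10) Q_s + c₀θ²s²D`.
-/

open scoped InnerProductSpace

section NearDiagonal

variable {E : Type*} [SeminormedAddCommGroup E] [NormedSpace ℝ E] {F : Type*}
  [NormedAddCommGroup F] [InnerProductSpace ℝ F]

lemma norm_sub_le_mul_norm_add_of_norm_sub_lt {u v : E} {β : ℝ} (hβ : β ≤ 1)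
    (h : ‖u - v‖ < β * ‖v‖) : ‖u - v‖ ≤ β * ‖u + v‖ := by
  have htri : 2 * ‖v‖ ≤ ‖u + v‖ + ‖u - v‖ := by
    have := norm_sub_le (u + v) (u - v)
    rwa [show u + v - (u - v) = (2 : ℝ) • v by rw [two_smul]; abel, norm_smul,
      Real.norm_two] at this
  have hβ0 : 0 ≤ β := by nlinarith [norm_nonneg (u - v), norm_nonneg v]
  have hv : ‖v‖ ≤ ‖u + v‖ := by nlinarith [norm_nonneg v]
  exact h.le.trans (mul_le_mul_of_nonneg_left hv hβ0)

lemma mul_norm_add_sq_le_four_mul_inner {u v : F} {β k : ℝ} (hβ : β ≤ 1) (hβk : β ^ 2 ≤ 1 - k)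
    (h : ‖u - v‖ < β * ‖v‖) : k * ‖u + v‖ ^ 2 ≤ 4 * ⟪u, v⟫_ℝ := by
  have hsub : ‖u - v‖ ^ 2 ≤ (1 - k) * ‖u + v‖ ^ 2 :=
    calc ‖u - v‖ ^ 2 ≤ (β * ‖u + v‖) ^ 2 :=
          pow_le_pow_left₀ (norm_nonneg _) (norm_sub_le_mul_norm_add_of_norm_sub_lt hβ h) 2
      _ = β ^ 2 * ‖u + v‖ ^ 2 := mul_pow _ _ _
      _ ≤ (1 - k) * ‖u + v‖ ^ 2 := by gcongr
  nlinarith [norm_add_sq_real u v, norm_sub_sq_real u v]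

end NearDiagonal

lemma nsq_eq_norm_sq (x : Fin 2 → ℝ) : nsq x = ‖WithLp.toLp 2 x‖ ^ 2 := by
  simp [nsq, EuclideanSpace.real_norm_sq_eq]

lemma sqrt_nsq (x : Fin 2 → ℝ) : Real.sqrt (nsq x) = ‖WithLp.toLp 2 x‖ := by
  rw [nsq_eq_norm_sq, Real.sqrt_sq (norm_nonneg _)]

lemma dot2_eq_inner (x y : Fin 2 → ℝ) : dot2 x y = ⟪WithLp.toLp 2 x, WithLp.toLp 2 y⟫_ℝ := by
  simp [dot2, PiLp.inner_apply, Fin.sum_univ_two, mul_comm]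

lemma nsq_nonneg (x : Fin 2 → ℝ) : 0 ≤ nsq x := by
  rw [nsq_eq_norm_sq]; positivity

lemma wedge_sq_add_dot2_sq (u v : Fin 2 → ℝ) : wedge u v ^ 2 + dot2 u v ^ 2 = nsq u * nsq v := by
  simp only [wedge, dot2, nsq, Fin.sum_univ_two]; ring

lemma wedge_smul_sub_smul_add (s : ℝ) (x y : Fin 2 → ℝ) :
    wedge ((1 + s) • x - (1 - s) • y) (x + y) = 2 * wedge x y := by
  simp only [wedge, Pi.add_apply, Pi.sub_apply, Pi.smul_apply, smul_eq_mul]; ring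

lemma four_mul_wedge_sq_le_Qform_mul_nsq_add (s : ℝ) (x y : Fin 2 → ℝ) :
    4 * wedge x y ^ 2 ≤ Qform s x y * nsq (x + y) := by
  have h := wedge_sq_add_dot2_sq ((1 + s) • x - (1 - s) • y) (x + y)
  rw [wedge_smul_sub_smul_add] at h
  rw [Qform, ← h]
  nlinarith [sq_nonneg (dot2 ((1 + s) • x - (1 - s) • y) (x + y))]

lemma mul_nsq_add_le_four_mul_dot2 {x y : Fin 2 → ℝ} {β k : ℝ} (hβ : β ≤ 1)
    (hβk : β ^ 2 ≤ 1 - k) (h : Real.sqrt (nsq (x - y)) < β * Real.sqrt (nsq y)) :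
    k * nsq (x + y) ≤ 4 * dot2 x y := by
  rw [sqrt_nsq, sqrt_nsq, WithLp.toLp_sub] at h
  rw [nsq_eq_norm_sq, WithLp.toLp_add, dot2_eq_inner]
  exact mul_norm_add_sq_le_four_mul_inner hβ hβk h

lemma Es_nonpos_of_mul_nsq_add_le {θ c₀ c₁ k s : ℝ} {x y : Fin 2 → ℝ} (hc₀ : 0 ≤ c₀)
    (hk : 0 ≤ k) (hc₁ : c₁ ^ 2 ≤ 18 / 5 * c₀ * k) (hxy : k * nsq (x + y) ≤ 4 * dot2 x y) :
    -(9 / 10) * Qform s x y - c₀ * θ ^ 2 * s ^ 2 * dot2 x y - c₁ * θ * s * wedge x y ≤ 0 := by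
  set Q := Qform s x y
  set D := dot2 x y
  set W := wedge x y
  have hQ : 0 ≤ Q := nsq_nonneg _
  have hD : 0 ≤ D := by nlinarith [nsq_nonneg (x + y)]
  have hkW : k * W ^ 2 ≤ Q * D := by
    nlinarith [four_mul_wedge_sq_le_Qform_mul_nsq_add s x y, mul_le_mul_of_nonneg_left hxy hQ]
  have hA : 0 ≤ 9 / 10 * Q := by positivity
  have hB : 0 ≤ c₀ * θ ^ 2 * s ^ 2 * D := by positivity
  have hC : (c₁ * θ * s * W) ^ 2 ≤ (9 / 10 * Q + c₀ * θ ^ 2 * s ^ 2 * D) ^ 2 :=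
    calc (c₁ * θ * s * W) ^ 2 = c₁ ^ 2 * (θ ^ 2 * s ^ 2 * W ^ 2) := by ring
      _ ≤ 18 / 5 * c₀ * k * (θ ^ 2 * s ^ 2 * W ^ 2) := by gcongr
      _ ≤ 4 * (9 / 10 * Q) * (c₀ * θ ^ 2 * s ^ 2 * D) := by
          nlinarith [mul_le_mul_of_nonneg_left hkW (by positivity : 0 ≤ c₀ * θ ^ 2 * s ^ 2)]
      _ ≤ _ := four_mul_le_sq_add _ _
  linarith [neg_abs_le (c₁ * θ * s * W), abs_le_of_sq_le_sq hC (add_nonneg hA hB)]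

theorem Es_nonpositive_near_diagonal_general (θ c₀ c₁ : ℝ)
    (hc₀ : 0 < c₀) (hrat : c₁ ^ 2 / c₀ < 18 / 5) :
    ∃ s₀ β δ : ℝ, s₀ ∈ Set.Ioo (0 : ℝ) 1 ∧ β ∈ Set.Ioo (0 : ℝ) 1 ∧ δ ∈ Set.Ioo (0 : ℝ) 1 ∧
      ∀ s : ℝ, 0 < s → s < s₀ → ∀ x y : Fin 2 → ℝ, x ≠ 0 → y ≠ 0 →
        0 ≤ dot2 x y → wedge x y < 0 →
        Real.sqrt (nsq (x - y)) < β * Real.sqrt (nsq y) →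
        |wedge x y| < δ * Real.sqrt (nsq x) * Real.sqrt (nsq y) →
        -(9 / 10) * Qform s x y - c₀ * θ ^ 2 * s ^ 2 * dot2 x y -
            c₁ * θ * s * wedge x y ≤ 0 := by
  set k := c₁ ^ 2 / (18 / 5 * c₀)
  have hk0 : 0 ≤ k := by positivity
  have hk1 : k < 1 := by
    rw [div_lt_one (by positivity)]
    linarith [(div_lt_iff₀ hc₀).mp hrat]
  have hc₁k : c₁ ^ 2 ≤ 18 / 5 * c₀ * k := by
    rw [mul_div_cancel₀ _ (by positivity)]
  have hβk : ((1 - k) / 2) ^ 2 ≤ 1 - k := by nlinarith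
  refine ⟨1 / 2, (1 - k) / 2, 1 / 2, ⟨by norm_num, by norm_num⟩, ⟨by linarith, by linarith⟩,
    ⟨by norm_num, by norm_num⟩, fun s _ _ x y _ _ _ _ hβ _ => ?_⟩
  exact Es_nonpos_of_mul_nsq_add_le hc₀.le hk0 hc₁k
    (mul_nsq_add_le_four_mul_dot2 (by linarith) hβk hβ)

/-- Let `θ > 0` and `0 < c₀ < 2 < c₁` with `c₁²/c₀ < 18/5`. Then there
exist `s₀, β, δ ∈ (0,1)` such that for all `s ∈ (0, s₀)` and all nonzero `x, y ∈ ℝ²` with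
`⟨x,y⟩ ≥ 0`, `x∧y < 0`, `|x-y| < β|y|` and `|x∧y| < δ|x||y|`:
`-(9/10) Q_s(x,y) - c₀ θ² s² ⟨x,y⟩ - c₁ θ s (x∧y) ≤ 0`. -/
theorem Es_nonpositive_near_diagonal (θ c₀ c₁ : ℝ) (hθ : 0 < θ)
    (hc₀ : 0 < c₀) (hc₀2 : c₀ < 2) (hc₁ : 2 < c₁) (hrat : c₁ ^ 2 / c₀ < 18 / 5) :
    ∃ s₀ β δ : ℝ, s₀ ∈ Set.Ioo (0 : ℝ) 1 ∧ β ∈ Set.Ioo (0 : ℝ) 1 ∧ δ ∈ Set.Ioo (0 : ℝ) 1 ∧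
      ∀ s : ℝ, 0 < s → s < s₀ → ∀ x y : Fin 2 → ℝ, x ≠ 0 → y ≠ 0 →
        0 ≤ dot2 x y → wedge x y < 0 →
        Real.sqrt (nsq (x - y)) < β * Real.sqrt (nsq y) →
        |wedge x y| < δ * Real.sqrt (nsq x) * Real.sqrt (nsq y) →
        -(9 / 10) * Qform s x y - c₀ * θ ^ 2 * s ^ 2 * dot2 x y -
            c₁ * θ * s * wedge x y ≤ 0 :=
  Es_nonpositive_near_diagonal_general θ c₀ c₁ hc₀ hrat
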